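/- Suppose x : ℕ → ℝ is a sequence of per-step seat indicators (values in {0,1}) for a person whose running average is pushed toward a target s ∈ [0,1] by a greedy rule: whenever the running average at step t is below s, x(t+1) = 1, and whenever it is above s, x(t+1) = 0. Then the running averages (1/t)·Σ_{i<t} x(i) converge to s. -/

import Mathlib

open Filter

/-!
The deviation `∑_{i<t} x i - s t` changes by `x t - s` per step, and the greedy rule always
moves it toward `0`: up by `1 - s ≤ 1` from below, down by `s ≤ 1` from above. Hence the
deviation never leaves `[-1, 1]`, and the running average differs from `s` by at most `1 / t`.
-/

open Finset

lemma abs_add_sub_le_one_of_greedy {d y s : ℝ} (hd : |d| ≤ 1) (hy : y ∈ Set.Icc 0 1)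
    (hs : s ∈ Set.Icc 0 1) (hneg : d < 0 → y = 1) (hpos : 0 < d → y = 0) :
    |d + y - s| ≤ 1 := by
  obtain ⟨hy0, hy1⟩ := hy
  obtain ⟨hs0, hs1⟩ := hs
  rw [abs_le] at hd ⊢
  rcases lt_trichotomy d 0 with h | h | h
  · rw [hneg h]; constructor <;> linarith
  · subst h; constructor <;> linarith
  · rw [hpos h]; constructor <;> linarith

lemma abs_sum_range_sub_mul_le_one_of_greedy {x : ℕ → ℝ} {s : ℝ}
    (hx : ∀ i, x i ∈ Set.Icc 0 1) (hs : s ∈ Set.Icc 0 1)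
    (hlow : ∀ t : ℕ, 1 ≤ t → ∑ i ∈ range t, x i < s * t → x t = 1)
    (hhigh : ∀ t : ℕ, 1 ≤ t → s * t < ∑ i ∈ range t, x i → x t = 0) (t : ℕ) :
    |∑ i ∈ range t, x i - s * t| ≤ 1 := by
  induction t with
  | zero => simp
  | succ t ih =>
    have hstep : ∑ i ∈ range (t + 1), x i - s * ↑(t + 1) =
        (∑ i ∈ range t, x i - s * t) + x t - s := by
      rw [sum_range_succ]; push_cast; ring
    rw [hstep]
    refine abs_add_sub_le_one_of_greedy ih (hx t) hs
      (fun h => hlow t ?_ (by linarith)) (fun h => hhigh t ?_ (by linarith))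
    all_goals exact Nat.one_le_iff_ne_zero.2 (by rintro rfl; simp at h)

lemma tendsto_div_of_abs_sub_mul_le {S : ℕ → ℝ} {s C : ℝ}
    (h : ∀ t : ℕ, |S t - s * t| ≤ C) :
    Tendsto (fun t : ℕ => S t / t) atTop (nhds s) := by
  have hdev : Tendsto (fun t : ℕ => S t / t - s) atTop (nhds 0) := by
    refine squeeze_zero_norm' ?_ (tendsto_const_div_atTop_nhds_zero_nat C)
    filter_upwards [eventually_gt_atTop 0] with t ht
    have ht' : (0 : ℝ) < t := by exact_mod_cast ht
    rw [Real.norm_eq_abs, show S t / t - s = (S t - s * t) / t by field_simp, abs_div,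
      abs_of_pos ht']
    gcongr
    exact h t
  simpa using hdev.add_const s

/-- If a 0/1 sequence `x` is driven by a greedy rule — whenever the
running average at step `t ≥ 1` is below a target `s ∈ [0,1]` the next value is 1,
and whenever it is above `s` the next value is 0 — then the running averages
converge to `s`. -/
theorem greedy_running_average_tendsto
    (x : ℕ → ℝ) (s : ℝ)
    (hx : ∀ i, x i = 0 ∨ x i = 1)
    (hs0 : 0 ≤ s) (hs1 : s ≤ 1)
    (hgreedy : ∀ t : ℕ, 1 ≤ t →
      ((∑ i ∈ Finset.range t, x i) / (t : ℝ) < s → x t = 1) ∧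
      ((∑ i ∈ Finset.range t, x i) / (t : ℝ) > s → x t = 0)) :
    Tendsto (fun t : ℕ => (∑ i ∈ Finset.range t, x i) / (t : ℝ)) atTop (nhds s) := by
  have hx01 : ∀ i, x i ∈ Set.Icc 0 1 := fun i => by rcases hx i with h | h <;> simp [h]
  have ht : ∀ t : ℕ, 1 ≤ t → (0 : ℝ) < t := fun t ht => by exact_mod_cast ht
  refine tendsto_div_of_abs_sub_mul_le <| abs_sum_range_sub_mul_le_one_of_greedy hx01 ⟨hs0, hs1⟩
    (fun t h1 h => ?_) (fun t h1 h => ?_)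
  · exact (hgreedy t h1).1 ((div_lt_iff₀ (ht t h1)).2 h)
  · exact (hgreedy t h1).2 ((lt_div_iff₀ (ht t h1)).2 h)
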